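/- arXiv:2511.13401 — 3 statements merged into one kernel-verified Lean document; each statement's English description precedes it below -/
import Mathlib

section
/- Let (V, η, ω) be linear contact data with Reeb vector R, H ∈ ℝ and α ∈ V*. A vector X ∈ V satisfies ι_X(η ∧ ω) = −H ω + α ∧ η if and only if it satisfies ι_X ω = α − α(R)η and η(X) = −H. -/
/-- The (2n+1)-form `η ∧ ωⁿ` (up to a nonzero normalization constant), written as a
sum over permutations, evaluated as a plain multilinear expression. -/
noncomputable def wedgeEtaOmegaPow {V : Type*} [AddCommGroup V] [Module ℝ V] (n : ℕ)
    (η : V → ℝ) (ω : V → V → ℝ) : (Fin (2 * n + 1) → V) → ℝ :=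
  fun v => ∑ σ : Equiv.Perm (Fin (2 * n + 1)),
    ((Equiv.Perm.sign σ : ℤ) : ℝ) *
      (η (v (σ ⟨0, by omega⟩)) *
        ∏ i : Fin n,
          ω (v (σ ⟨2 * i.1 + 1, by have := i.2; omega⟩))
            (v (σ ⟨2 * i.1 + 2, by have := i.2; omega⟩)))

/-- Equivalence of the Reeb-independent condition
`ι_X(η ∧ ω) = −H ω + α ∧ η` with the standard contact Hamiltonian conditions
`ι_X ω = α − α(R) η` and `η(X) = −H`. -/
theorem hamiltonian_two_form_equiv {V : Type*} [AddCommGroup V] [Module ℝ V]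
    [FiniteDimensional ℝ V] (n : ℕ) (hn : 0 < n) (hdim : Module.finrank ℝ V = 2 * n + 1)
    (η : V →ₗ[ℝ] ℝ) (ω : V →ₗ[ℝ] V →ₗ[ℝ] ℝ)
    (hanti : ∀ u w, ω u w = - ω w u)
    (hcontact : wedgeEtaOmegaPow n (fun v => η v) (fun u w => ω u w) ≠ 0)
    (R : V) (hR : ∀ w, ω R w = 0) (hR1 : η R = 1)
    (H : ℝ) (α : V →ₗ[ℝ] ℝ) (X : V) :
    (∀ u v, η X * ω u v - η u * ω X v + η v * ω X u
      = -H * ω u v + (α u * η v - α v * η u)) ↔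
      (ω X = α - α R • η ∧ η X = -H) := by
  constructor
  · intro h
    have key : ∀ u, ω X u = α u - α R * η u := by
      intro u
      have h1 := h u R
      have e1 : ω u R = 0 := by rw [hanti]; simp [hR]
      have e2 : ω X R = 0 := by rw [hanti]; simp [hR]
      rw [e1, e2, hR1] at h1
      linarith
    have hω : ω X = α - α R • η := by
      ext u; simp [key u]
    refine ⟨hω, ?_⟩
    have hex : ¬ ∀ u v, ω u v = 0 := by
      intro hz
      apply hcontact
      funext v
      unfold wedgeEtaOmegaPow
      apply Finset.sum_eq_zero
      intro σ _
      rw [Finset.prod_eq_zero (Finset.mem_univ (⟨0, hn⟩ : Fin n)) (hz _ _)]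
      ring
    push_neg at hex
    obtain ⟨u, v, huv⟩ := hex
    have h2 := h u v
    rw [key u, key v] at h2
    have : (η X + H) * ω u v = 0 := by ring_nf; ring_nf at h2; linarith
    have := mul_eq_zero.mp this
    rcases this with h3 | h3
    · linarith
    · exact absurd h3 huv
  · rintro ⟨h1, h2⟩ u v
    have hu := LinearMap.congr_fun h1 u
    have hv := LinearMap.congr_fun h1 v
    simp at hu hv
    rw [hu, hv, h2]; ring
end

section
/- Let V be a finite-dimensional real vector space, L : V → ℝ smooth with Legendre map FL = DL, E(v) = DL(v)(v) − L(v), and suppose H : V* → ℝ is smooth with E = H ∘ FL. Then for every v ∈ V, the vector v − DH(FL(v)) lies in ker D²L(v) (identifying V** with V). -/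
/-- If the energy `E(v) = DL(v)(v) − L(v)` projects through the
Legendre map `FL = DL` via a smooth Hamiltonian `H`, i.e. `E = H ∘ FL`, then for every
`v` the vector `v − DH(FL(v))` lies in the kernel of the Hessian `D²L(v)` (identifying
`V**` with `V` via the hypothesis `hγ`). -/
theorem resolution_of_identity {V : Type*} [NormedAddCommGroup V] [NormedSpace ℝ V]
    [FiniteDimensional ℝ V] (L : V → ℝ) (hL : ContDiff ℝ (⊤ : ℕ∞) L)
    (H : (V →L[ℝ] ℝ) → ℝ) (hH : ContDiff ℝ (⊤ : ℕ∞) H)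
    (γ : V → V)
    (hγ : ∀ (v : V) (ξ : V →L[ℝ] ℝ), fderiv ℝ H (fderiv ℝ L v) ξ = ξ (γ v))
    (hE : ∀ v : V, fderiv ℝ L v v - L v = H (fderiv ℝ L v)) :
    ∀ v w : V, fderiv ℝ (fderiv ℝ L) v (v - γ v) w = 0 := by
  intro v w
  have hLd : Differentiable ℝ L := hL.differentiable (by simp)
  have hL1 : ContDiff ℝ (⊤ : ℕ∞) (fderiv ℝ L) := hL.fderiv_right (by simp)
  have hL1d : Differentiable ℝ (fderiv ℝ L) := hL1.differentiable (by simp)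
  set f'' := fderiv ℝ (fderiv ℝ L) v with hf''
  have hd2 : HasFDerivAt (fderiv ℝ L) f'' v := (hL1d v).hasFDerivAt
  -- derivative of E(x) = DL(x) x - L x
  have h1 : HasFDerivAt (fun x => fderiv ℝ L x x - L x)
      (((fderiv ℝ L v).comp (ContinuousLinearMap.id ℝ V) + f''.flip v) - fderiv ℝ L v) v :=
    (hd2.clm_apply (hasFDerivAt_id v)).sub (hLd v).hasFDerivAt
  -- derivative of H ∘ FL
  have h2 : HasFDerivAt (fun x => H (fderiv ℝ L x))
      ((fderiv ℝ H (fderiv ℝ L v)).comp f'') v :=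
    ((hH.differentiable (by simp) _).hasFDerivAt).comp v hd2
  have hfun : (fun x => fderiv ℝ L x x - L x) = fun x => H (fderiv ℝ L x) := funext hE
  rw [hfun] at h1
  have heq := h1.unique h2
  have key : ∀ u : V, f'' u v = f'' u (γ v) := by
    intro u
    have := congrFun (congrArg (DFunLike.coe) heq) u
    simp only [ContinuousLinearMap.sub_apply, ContinuousLinearMap.add_apply,
      ContinuousLinearMap.comp_apply, ContinuousLinearMap.coe_id', id_eq,
      ContinuousLinearMap.flip_apply] at this
    rw [hγ v (f'' u)] at this
    linarith
  have hsymm : ∀ a b : V, f'' a b = f'' b a :=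
    second_derivative_symmetric (fun y => (hLd y).hasFDerivAt) hd2
  have : f'' (v - γ v) w = f'' w (v - γ v) := hsymm _ _
  rw [this, map_sub, key w]
  ring
end

section
/- Let Q = ℝⁿ and L : ℝⁿ × ℝⁿ × ℝ → ℝ smooth (coordinates (q,v,s)). Define K·f for f ∈ C∞(ℝⁿ×ℝⁿ×ℝ → ℝ in variables (q,p,s)) by (K·f)(q,v,s) = Σᵢ vⁱ (∂f/∂qⁱ)(FL(q,v,s)) + Σᵢ (∂L/∂qⁱ + (∂L/∂s)(∂L/∂vⁱ)) (∂f/∂pᵢ)(FL(q,v,s)) + L(q,v,s) (∂f/∂s)(FL(q,v,s)), where FL(q,v,s) = (q, ∂L/∂v, s). Then a smooth curve t ↦ (q(t), v(t), s(t)) satisfies d/dt[f(FL(q,v,s))] = (K·f)(q,v,s) for all f if and only if it satisfies the second-order condition q̇ = v together with the Herglotz–Euler–Lagrange equations d/dt(∂L/∂vⁱ) = ∂L/∂qⁱ + (∂L/∂s)(∂L/∂vⁱ) and ṡ = L. -/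
/-- The space `Tℝⁿ × ℝ ≅ T*ℝⁿ × ℝ` with coordinates `(q, v, s)` (resp. `(q, p, s)`). -/
abbrev Sp (n : ℕ) := (Fin n → ℝ) × (Fin n → ℝ) × ℝ

/-- Basis tangent direction `∂/∂qⁱ`. -/
noncomputable def eQ {n : ℕ} (i : Fin n) : Sp n := (Pi.single i 1, 0, 0)

/-- Basis tangent direction `∂/∂vⁱ` (or `∂/∂pᵢ`). -/
noncomputable def eV {n : ℕ} (i : Fin n) : Sp n := (0, Pi.single i 1, 0)

/-- Basis tangent direction `∂/∂s`. -/
noncomputable def eS {n : ℕ} : Sp n := (0, 0, 1)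

/-- The Legendre map `FL(q,v,s) = (q, ∂L/∂v(q,v,s), s)`. -/
noncomputable def FL {n : ℕ} (L : Sp n → ℝ) (m : Sp n) : Sp n :=
  (m.1, fun i => fderiv ℝ L m (eV i), m.2.2)

/-- The evolution operator applied to a function `f` of `(q,p,s)`, giving a function of
`(q,v,s)`:
`(K·f)(q,v,s) = Σᵢ vⁱ (∂f/∂qⁱ)∘FL + Σᵢ (∂L/∂qⁱ + (∂L/∂s)(∂L/∂vⁱ)) (∂f/∂pᵢ)∘FL
  + L (∂f/∂s)∘FL`. -/
noncomputable def Kop {n : ℕ} (L f : Sp n → ℝ) (m : Sp n) : ℝ :=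
  (∑ i, m.2.1 i * fderiv ℝ f (FL L m) (eQ i)) +
  (∑ i, (fderiv ℝ L m (eQ i) + fderiv ℝ L m eS * fderiv ℝ L m (eV i)) *
    fderiv ℝ f (FL L m) (eV i)) +
  L m * fderiv ℝ f (FL L m) eS

noncomputable def pQ {n : ℕ} (i : Fin n) : Sp n →L[ℝ] ℝ :=
  (ContinuousLinearMap.proj i).comp (ContinuousLinearMap.fst ℝ (Fin n → ℝ) ((Fin n → ℝ) × ℝ))
noncomputable def pV {n : ℕ} (i : Fin n) : Sp n →L[ℝ] ℝ :=
  ((ContinuousLinearMap.proj i).comp (ContinuousLinearMap.fst ℝ (Fin n → ℝ) ℝ)).comp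
    (ContinuousLinearMap.snd ℝ (Fin n → ℝ) ((Fin n → ℝ) × ℝ))
noncomputable def pS {n : ℕ} : Sp n →L[ℝ] ℝ :=
  (ContinuousLinearMap.snd ℝ (Fin n → ℝ) ℝ).comp
    (ContinuousLinearMap.snd ℝ (Fin n → ℝ) ((Fin n → ℝ) × ℝ))

@[simp] lemma pQ_apply {n : ℕ} (i : Fin n) (m : Sp n) : pQ i m = m.1 i := rfl
@[simp] lemma pV_apply {n : ℕ} (i : Fin n) (m : Sp n) : pV i m = m.2.1 i := rfl
@[simp] lemma pS_apply {n : ℕ} (m : Sp n) : pS m = m.2.2 := rfl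

lemma decomp {n : ℕ} (m : Sp n) :
    m = (∑ i, m.1 i • eQ i) + (∑ i, m.2.1 i • eV i) + m.2.2 • eS := by
  have h1 : ∀ a : Fin n → ℝ, ∑ i, a i • (Pi.single i 1 : Fin n → ℝ) = a := by
    intro a
    have := Finset.univ_sum_single a
    rw [← this]
    congr 1; funext i
    simp [← Pi.single_smul]
  ext j
  · simp [eQ, eV, eS, Prod.fst_sum, h1]
  · simp [eQ, eV, eS, Prod.snd_sum, Prod.fst_sum, h1]
  · simp [eQ, eV, eS, Prod.snd_sum]

lemma clm_decomp {n : ℕ} (φ : Sp n →L[ℝ] ℝ) (m : Sp n) :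
    φ m = (∑ i, m.1 i * φ (eQ i)) + (∑ i, m.2.1 i * φ (eV i)) + m.2.2 * φ eS := by
  conv_lhs => rw [decomp m]
  simp [map_sum, smul_eq_mul]


/-- A smooth curve `t ↦ (q(t), v(t), s(t))` satisfies
`d/dt (f ∘ FL ∘ c) = (K·f) ∘ c` for every smooth `f` iff it satisfies the second-order
condition `q̇ = v` together with the Herglotz–Euler–Lagrange equations
`d/dt(∂L/∂vⁱ) = ∂L/∂qⁱ + (∂L/∂s)(∂L/∂vⁱ)` and `ṡ = L`. -/
theorem evolution_operator_integral_curves {n : ℕ} (L : Sp n → ℝ)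
    (hL : ContDiff ℝ (⊤ : ℕ∞) L) (c : ℝ → Sp n) (hc : ContDiff ℝ (⊤ : ℕ∞) c) :
    (∀ f : Sp n → ℝ, ContDiff ℝ (⊤ : ℕ∞) f →
      ∀ t : ℝ, deriv (fun t' => f (FL L (c t'))) t = Kop L f (c t)) ↔
    (∀ t : ℝ,
      (∀ i, deriv (fun t' => (c t').1 i) t = (c t).2.1 i) ∧
      (∀ i, deriv (fun t' => fderiv ℝ L (c t') (eV i)) t
        = fderiv ℝ L (c t) (eQ i) + fderiv ℝ L (c t) eS * fderiv ℝ L (c t) (eV i)) ∧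
      deriv (fun t' => (c t').2.2) t = L (c t)) := by
  have hdL : ContDiff ℝ (⊤ : ℕ∞) (fderiv ℝ L) := hL.fderiv_right (by simp)
  have hg : ∀ i : Fin n, ContDiff ℝ (⊤ : ℕ∞) (fun m : Sp n => fderiv ℝ L m (eV i)) :=
    fun i => (ContinuousLinearMap.apply ℝ ℝ (eV i : Sp n)).contDiff.comp hdL
  have hcd : ∀ t : ℝ, DifferentiableAt ℝ c t :=
    fun t => (hc.differentiable (by simp)).differentiableAt
  constructor
  · intro H t
    refine ⟨fun i => ?_, fun i => ?_, ?_⟩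
    · have h := H (pQ i) (pQ i).contDiff t
      simp only [Kop, ContinuousLinearMap.fderiv, pQ_apply] at h
      simp only [FL] at h
      simpa [eQ, eV, eS, Pi.single_apply] using h
    · have h := H (pV i) (pV i).contDiff t
      simp only [Kop, ContinuousLinearMap.fderiv, pV_apply] at h
      simp only [FL] at h
      simpa [eQ, eV, eS, Pi.single_apply] using h
    · have h := H pS pS.contDiff t
      simp only [Kop, ContinuousLinearMap.fderiv, pS_apply] at h
      simp only [FL] at h
      simpa [eQ, eV, eS] using h
  · intro H f hf t
    obtain ⟨h1, h2, h3⟩ := H t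
    set D : Sp n := ((c t).2.1,
      fun i => fderiv ℝ L (c t) (eQ i) + fderiv ℝ L (c t) eS * fderiv ℝ L (c t) (eV i),
      L (c t)) with hD
    have hc1 : ∀ i, HasDerivAt (fun t' => (c t').1 i) ((c t).2.1 i) t := by
      intro i
      have hd : DifferentiableAt ℝ (fun t' => (c t').1 i) t :=
        ((pQ i).differentiable.differentiableAt).comp t (hcd t)
      have := hd.hasDerivAt
      rwa [h1 i] at this
    have hc2 : ∀ i, HasDerivAt (fun t' => fderiv ℝ L (c t') (eV i)) (D.2.1 i) t := by
      intro i
      have hd : DifferentiableAt ℝ (fun t' => fderiv ℝ L (c t') (eV i)) t :=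
        (((hg i).differentiable (by simp)).differentiableAt).comp t (hcd t)
      have := hd.hasDerivAt
      rwa [h2 i] at this
    have hc3 : HasDerivAt (fun t' => (c t').2.2) (L (c t)) t := by
      have hd : DifferentiableAt ℝ (fun t' => (c t').2.2) t :=
        ((pS (n := n)).differentiable.differentiableAt).comp t (hcd t)
      have := hd.hasDerivAt
      rwa [h3] at this
    have hq : HasDerivAt (fun t' => (c t').1) ((c t).2.1) t := hasDerivAt_pi.2 hc1
    have hp : HasDerivAt (fun t' => (fun i => fderiv ℝ L (c t') (eV i))) D.2.1 t :=
      hasDerivAt_pi.2 hc2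
    have hFLc : HasDerivAt (fun t' => FL L (c t')) D t := HasDerivAt.prodMk hq (HasDerivAt.prodMk hp hc3)
    have hstep : HasDerivAt (fun t' => f (FL L (c t')))
        (fderiv ℝ f (FL L (c t)) D) t :=
      (((hf.differentiable (by simp)).differentiableAt).hasFDerivAt).comp_hasDerivAt t hFLc
    rw [hstep.deriv, clm_decomp]
    rfl
end
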